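/- arXiv:2103.15168 — 4 statements merged into one kernel-verified Lean document; each statement's English description precedes it below -/
import Mathlib

section
/- Let λ > 0, a₀ ∈ (0, 1/λ), v₃ > 0, s ∈ {+1, −1}, and ε ∈ {+1, −1}. Let ℓ_ε be defined by λℓ₊ = arcsin(λa₀) and λℓ₋ = π − arcsin(λa₀), and let ā_ε(τ) = sin(λ ℓ_ε τ)/λ. Then 3 s v₃ ∫₀¹ [ ā_ε(τ) ā_ε'(τ)²/ℓ_ε + ℓ_ε (ā_ε(τ) − λ² ā_ε(τ)³) ] dτ = s · (2v₃/λ²) · [ 1 − ε (1 − (λa₀)²)^{3/2} ]. -/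
/-!
On the instanton `a τ = sin (λℓτ) / λ` one has `a' = ℓ cos (λℓτ)`, and by `sin² + cos² = 1`
the kinetic and potential terms of the Lagrangian are equal, so the integrand is
`(2ℓ/λ) sin (λℓτ) cos² (λℓτ)`. Its integral over `[0, 1]` is `2 (1 - cos³ (λℓ)) / (3λ²)`, and
`cos (λℓ) = ε √(1 - (λa₀)²)` because `λℓ` is `arcsin (λa₀)` or its supplement.
-/

open Real intervalIntegral

theorem mul_integral_sin_mul_cos_sq (c : ℝ) :
    c * ∫ τ in (0:ℝ)..1, sin (c * τ) * cos (c * τ) ^ 2 = (1 - cos c ^ 3) / 3 := by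
  have hsub : ∫ x in (0:ℝ)..c, sin x ^ (2 * 0 + 1) * cos x ^ 2 = (1 - cos c ^ 3) / 3 := by
    rw [integral_sin_pow_odd_mul_cos_pow]
    norm_num [integral_pow]
  have := smul_integral_comp_mul_left (a := 0) (b := 1) (fun x => sin x * cos x ^ 2) c
  simp_all

theorem hasDerivAt_sin_mul_div (c k τ : ℝ) :
    HasDerivAt (fun τ => sin (c * τ) / k) (c * cos (c * τ) / k) τ := by
  simpa [mul_comm] using (((hasDerivAt_id τ).const_mul c).sin).div_const k

theorem integral_lagrangian_sin_div (lam ℓ : ℝ) (hlam : lam ≠ 0) (a : ℝ → ℝ)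
    (ha : a = fun τ => sin (lam * ℓ * τ) / lam) :
    ∫ τ in (0:ℝ)..1, (a τ * (deriv a τ) ^ 2 / ℓ + ℓ * (a τ - lam ^ 2 * (a τ) ^ 3))
      = 2 * (1 - cos (lam * ℓ) ^ 3) / (3 * lam ^ 2) := by
  have hdensity (τ : ℝ) : a τ * (deriv a τ) ^ 2 / ℓ + ℓ * (a τ - lam ^ 2 * (a τ) ^ 3)
      = 2 * ℓ / lam * (sin (lam * ℓ * τ) * cos (lam * ℓ * τ) ^ 2) := by
    rw [ha, (hasDerivAt_sin_mul_div _ _ τ).deriv]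
    rcases eq_or_ne ℓ 0 with rfl | hℓ
    · simp
    field_simp
    linear_combination (-sin (lam * ℓ * τ)) * sin_sq_add_cos_sq (lam * ℓ * τ)
  simp only [hdensity, integral_const_mul]
  rw [show ∀ I, 2 * ℓ / lam * I = 2 / lam ^ 2 * (lam * ℓ * I) by intro I; field_simp,
    mul_integral_sin_mul_cos_sq]
  field_simp

theorem cos_pow_three_of_cap (x ε θ : ℝ) (hx : x ^ 2 ≤ 1)
    (hθ : (ε = 1 ∧ θ = arcsin x) ∨ (ε = -1 ∧ θ = π - arcsin x)) :
    cos θ ^ 3 = ε * (1 - x ^ 2) ^ ((3:ℝ)/2) := by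
  rw [rpow_div_two_eq_sqrt _ (by linarith), ← cos_arcsin]
  norm_cast
  rcases hθ with ⟨rfl, rfl⟩ | ⟨rfl, rfl⟩
  · ring
  · rw [cos_pi_sub]; ring

theorem instanton_on_shell_action_general
    (lam a₀ v₃ s ε ℓ : ℝ) (hlam : 0 < lam) (ha₀ : a₀ ∈ Set.Ioo 0 (1 / lam))
    (hℓ : (ε = 1 ∧ lam * ℓ = Real.arcsin (lam * a₀)) ∨
          (ε = -1 ∧ lam * ℓ = Real.pi - Real.arcsin (lam * a₀)))
    (a : ℝ → ℝ) (ha : a = fun τ => Real.sin (lam * ℓ * τ) / lam) :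
    3 * s * v₃ * ∫ τ in (0:ℝ)..1,
        (a τ * (deriv a τ) ^ 2 / ℓ + ℓ * (a τ - lam ^ 2 * (a τ) ^ 3))
      = s * (2 * v₃ / lam ^ 2) * (1 - ε * (1 - (lam * a₀) ^ 2) ^ ((3:ℝ)/2)) := by
  have hx : (lam * a₀) ^ 2 ≤ 1 := by
    have hlt : lam * a₀ < 1 := by rw [← lt_div_iff₀' hlam]; exact ha₀.2
    nlinarith [mul_pos hlam ha₀.1]
  rw [integral_lagrangian_sin_div lam ℓ hlam.ne' a ha, ← cos_pow_three_of_cap _ _ _ hx hℓ]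
  field_simp

/-- On-shell Euclidean actions of the small-cap (`ε = +1`) and big-cap (`ε = −1`)
instantons: `S̄_E^ε = s (2v₃/λ²) [1 − ε (1 − (λa₀)²)^{3/2}]`. -/
theorem instanton_on_shell_action
    (lam a₀ v₃ s ε ℓ : ℝ) (hlam : 0 < lam) (ha₀ : a₀ ∈ Set.Ioo 0 (1 / lam))
    (hv : 0 < v₃) (hs : s = 1 ∨ s = -1)
    (hℓ : (ε = 1 ∧ lam * ℓ = Real.arcsin (lam * a₀)) ∨
          (ε = -1 ∧ lam * ℓ = Real.pi - Real.arcsin (lam * a₀)))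
    (a : ℝ → ℝ) (ha : a = fun τ => Real.sin (lam * ℓ * τ) / lam) :
    3 * s * v₃ * ∫ τ in (0:ℝ)..1,
        (a τ * (deriv a τ) ^ 2 / ℓ + ℓ * (a τ - lam ^ 2 * (a τ) ^ 3))
      = s * (2 * v₃ / lam ^ 2) * (1 - ε * (1 - (lam * a₀) ^ 2) ^ ((3:ℝ)/2)) :=
  instanton_on_shell_action_general lam a₀ v₃ s ε ℓ hlam ha₀ hℓ a ha
end

section
/- Let ℓ > 0. Define Φ₁(θ) = cos θ, Φ₂(θ) = −1 + (cos θ / 2) · ln((1 + cos θ)/(1 − cos θ)), and for θ* ∈ (0, π) set A(θ*) = sin θ* · Φ₂(θ*)/ℓ and B(θ*) = −sin θ* · cos θ*/ℓ. Then (i) the function Φ = A(θ*) Φ₁ + B(θ*) Φ₂ satisfies Φ(θ*) = 0 and Φ'(θ*) = 1/ℓ; and (ii) as θ* → 0⁺, A(θ*) · ℓ / (θ* · ln(1/θ*)) → 1 and B(θ*) · ℓ / θ* → −1. -/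
/-!
The second solution is `Φ₂ = Q₁ ∘ cos`, where `Q₁` is the Legendre function of the second kind.
The Legendre Wronskian `P₁ Q₁' - P₁' Q₁ = 1 / (1 - x²)` becomes `-1 / sin θ` in the variable `θ`,
which is exactly what makes `A Φ₁ + B Φ₂` have slope `1/ℓ` at `θ*`. For the asymptotics,
the half-angle formulas give `Q₁ (cos θ) = -cos θ · log (tan (θ/2)) - 1`, and
`log (tan (θ/2)) ∼ log θ` because `tan (θ/2) / θ` has the nonzero limit `1/2`.
-/

open Filter Real Set Topology

noncomputable def legendreQ₁ (x : ℝ) : ℝ := x / 2 * log ((1 + x) / (1 - x)) - 1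

lemma hasDerivAt_legendreQ₁ {x : ℝ} (hx : x ∈ Ioo (-1) 1) :
    HasDerivAt legendreQ₁ (log ((1 + x) / (1 - x)) / 2 + x / (1 - x ^ 2)) x := by
  obtain ⟨hx₁, hx₂⟩ := hx
  have hp : 1 + x ≠ 0 := by linarith
  have hm : 1 - x ≠ 0 := by linarith
  have hratio : HasDerivAt (fun y => (1 + y) / (1 - y)) (2 / (1 - x) ^ 2) x :=
    (((hasDerivAt_id' x).const_add 1).div ((hasDerivAt_id' x).const_sub 1) hm).congr_deriv
      (by ring)
  refine ((((hasDerivAt_id' x).div_const 2).mul (hratio.log (div_ne_zero hp hm))).sub_const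
    1).congr_deriv ?_
  have : 1 - x ^ 2 = (1 + x) * (1 - x) := by ring
  rw [this]
  field_simp

lemma legendreQ₁_wronskian {x : ℝ} (hx : x ∈ Ioo (-1) 1) :
    x * deriv legendreQ₁ x - legendreQ₁ x = 1 / (1 - x ^ 2) := by
  have hx₂ : 1 - x ^ 2 ≠ 0 := by nlinarith [hx.1, hx.2]
  rw [(hasDerivAt_legendreQ₁ hx).deriv, legendreQ₁]
  field_simp
  ring

lemma cos_mem_Ioo_neg_one_one {θ : ℝ} (hθ : θ ∈ Ioo 0 π) : cos θ ∈ Ioo (-1) 1 := by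
  constructor
  · simpa using cos_lt_cos_of_nonneg_of_le_pi hθ.1.le le_rfl hθ.2
  · simpa using cos_lt_cos_of_nonneg_of_le_pi le_rfl hθ.2.le hθ.1

lemma hasDerivAt_gelfandYaglom_solution (ℓ : ℝ) {θ : ℝ} (hθ : θ ∈ Ioo 0 π) :
    HasDerivAt (fun φ => sin θ * legendreQ₁ (cos θ) / ℓ * cos φ
      + -(sin θ * cos θ) / ℓ * legendreQ₁ (cos φ)) (1 / ℓ) θ := by
  have hc := cos_mem_Ioo_neg_one_one hθ
  have hQ : HasDerivAt (fun φ => legendreQ₁ (cos φ)) (deriv legendreQ₁ (cos θ) * -sin θ) θ :=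
    (hasDerivAt_legendreQ₁ hc).differentiableAt.hasDerivAt.comp θ (hasDerivAt_cos θ)
  refine (((hasDerivAt_cos θ).const_mul _).add (hQ.const_mul _)).congr_deriv ?_
  have hW := legendreQ₁_wronskian hc
  have hs : sin θ ^ 2 = 1 - cos θ ^ 2 := sin_sq θ
  have hs₀ : 1 - cos θ ^ 2 ≠ 0 := by
    rw [← hs]; exact pow_ne_zero 2 (sin_pos_of_pos_of_lt_pi hθ.1 hθ.2).ne'
  calc _ = sin θ ^ 2 / ℓ * (cos θ * deriv legendreQ₁ (cos θ) - legendreQ₁ (cos θ)) := by ring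
    _ = 1 / ℓ := by rw [hW, hs]; field_simp

lemma tendsto_div_self_nhdsGT_of_hasDerivAt {f : ℝ → ℝ} {f' : ℝ} (hf : HasDerivAt f f' 0)
    (hf₀ : f 0 = 0) : Tendsto (fun t => f t / t) (𝓝[>] 0) (𝓝 f') := by
  simpa [hf₀, div_eq_inv_mul] using hf.tendsto_slope_zero_right

lemma tendsto_log_div_log_of_tendsto_div_self {f : ℝ → ℝ} {c : ℝ}
    (hf : Tendsto (fun t => f t / t) (𝓝[>] 0) (𝓝 c)) (hc : c ≠ 0) :
    Tendsto (fun t => log (f t) / log t) (𝓝[>] 0) (𝓝 1) := by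
  have hlog : Tendsto (fun t => log (f t / t) * (log t)⁻¹ + 1) (𝓝[>] 0) (𝓝 (log c * 0 + 1)) :=
    (((continuousAt_log hc).tendsto.comp hf).mul
      tendsto_log_nhdsGT_zero.inv_tendsto_atBot).add_const 1
  rw [mul_zero, zero_add] at hlog
  refine hlog.congr' ?_
  filter_upwards [hf.eventually_ne hc, Ioo_mem_nhdsGT (zero_lt_one' ℝ)] with t hft ht
  have hlt : log t ≠ 0 := (log_neg ht.1 ht.2).ne
  have ht₀ : t ≠ 0 := ht.1.ne'
  rw [show f t = f t / t * t by field_simp, log_mul hft ht₀]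
  field_simp

lemma legendreQ₁_cos {θ : ℝ} (hθ : θ ∈ Ioo 0 π) :
    legendreQ₁ (cos θ) = -cos θ * log (tan (θ / 2)) - 1 := by
  obtain ⟨hθ₀, hθπ⟩ := hθ
  have hs : sin (θ / 2) ≠ 0 := (sin_pos_of_pos_of_lt_pi (by linarith) (by linarith)).ne'
  have hc : cos (θ / 2) ≠ 0 := (cos_pos_of_mem_Ioo ⟨by linarith, by linarith⟩).ne'
  have hcos : cos θ = 2 * cos (θ / 2) ^ 2 - 1 := by rw [← cos_two_mul]; ring_nf
  have hratio : (1 + cos θ) / (1 - cos θ) = (tan (θ / 2))⁻¹ ^ 2 := by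
    have hs₂ : 1 - cos θ = 2 * sin (θ / 2) ^ 2 := by rw [hcos, sin_sq]; ring
    rw [hs₂, hcos, tan_eq_sin_div_cos]
    field_simp
    ring
  rw [legendreQ₁, hratio, log_pow, log_inv]
  push_cast
  ring

lemma tendsto_cos_nhdsGT_zero : Tendsto cos (𝓝[>] 0) (𝓝 1) := by
  simpa using continuous_cos.continuousWithinAt.tendsto (x := 0) (s := Ioi 0)

lemma tendsto_legendreQ₁_cos_div_log_inv :
    Tendsto (fun t => legendreQ₁ (cos t) / log (1 / t)) (𝓝[>] 0) (𝓝 1) := by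
  have htan : HasDerivAt (fun t => tan (t / 2)) (1 / 2) 0 := by
    have h := (hasDerivAt_tan (by simp)).comp (0 : ℝ) ((hasDerivAt_id' 0).div_const 2)
    simpa [Function.comp_def] using h
  have hlogtan := tendsto_log_div_log_of_tendsto_div_self
    (tendsto_div_self_nhdsGT_of_hasDerivAt htan (by simp)) (by norm_num)
  have hlim := (tendsto_cos_nhdsGT_zero.mul hlogtan).add tendsto_log_nhdsGT_zero.inv_tendsto_atBot
  rw [mul_one, add_zero] at hlim
  refine hlim.congr' ?_
  filter_upwards [Ioo_mem_nhdsGT pi_pos] with t ht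
  rw [legendreQ₁_cos ht, one_div, log_inv, Pi.inv_apply]
  field_simp
  ring

/-- Solution of the regularized Gelfand–Yaglom initial-value problem for the
scale-factor fluctuation operator: `Φ = A(θ*) Φ₁ + B(θ*) Φ₂` with
`A(θ*) = sin θ* Φ₂(θ*)/ℓ`, `B(θ*) = −sin θ* cos θ*/ℓ` satisfies `Φ(θ*) = 0`,
`Φ'(θ*) = 1/ℓ`, and as `θ* → 0⁺` one has `A(θ*) ∼ (θ*/ℓ) ln(1/θ*)` and
`B(θ*) ∼ −θ*/ℓ`. -/
theorem gelfand_yaglom_initial_value_asymptotics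
    (ℓ : ℝ) (hℓ : 0 < ℓ) (Φ₁ Φ₂ A B : ℝ → ℝ)
    (hΦ₁ : Φ₁ = fun θ => Real.cos θ)
    (hΦ₂ : Φ₂ = fun θ =>
      -1 + (Real.cos θ / 2) * Real.log ((1 + Real.cos θ) / (1 - Real.cos θ)))
    (hA : A = fun t => Real.sin t * Φ₂ t / ℓ)
    (hB : B = fun t => -(Real.sin t * Real.cos t) / ℓ) :
    (∀ θs ∈ Set.Ioo 0 Real.pi,
      A θs * Φ₁ θs + B θs * Φ₂ θs = 0 ∧
      deriv (fun θ => A θs * Φ₁ θ + B θs * Φ₂ θ) θs = 1 / ℓ) ∧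
    Tendsto (fun t => A t * ℓ / (t * Real.log (1 / t))) (nhdsWithin 0 (Set.Ioi 0))
      (nhds 1) ∧
    Tendsto (fun t => B t * ℓ / t) (nhdsWithin 0 (Set.Ioi 0)) (nhds (-1)) := by
  have hΦ₂Q : Φ₂ = fun θ => legendreQ₁ (cos θ) := by
    rw [hΦ₂]; ext θ; rw [legendreQ₁]; ring
  subst hΦ₁ hA hB hΦ₂Q
  have hsin : Tendsto (fun t => sin t / t) (𝓝[>] 0) (𝓝 1) :=
    tendsto_div_self_nhdsGT_of_hasDerivAt ((hasDerivAt_sin 0).congr_deriv cos_zero) sin_zero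
  refine ⟨fun θ hθ => ⟨by ring, (hasDerivAt_gelfandYaglom_solution ℓ hθ).deriv⟩, ?_, ?_⟩
  · have hA := hsin.mul tendsto_legendreQ₁_cos_div_log_inv
    rw [mul_one] at hA
    refine hA.congr fun t => ?_
    rw [div_mul_cancel₀ _ hℓ.ne', mul_div_mul_comm]
  · have hB := (hsin.mul tendsto_cos_nhdsGT_zero).neg
    rw [mul_one] at hB
    refine hB.congr fun t => ?_
    rw [div_mul_cancel₀ _ hℓ.ne']
    ring
end

section
/- Let λ ∈ ℝ, ℓ > 0, let J ⊆ ℝ be an open interval, and let ā : J → ℝ be twice continuously differentiable with ā > 0 on J, satisfying (ā'(τ))² = ℓ²(1 − λ² ā(τ)²) and ā''(τ) = −λ² ℓ² ā(τ) on J. Let ζ : J → ℝ be differentiable with ζ'(τ) = ℓ / √(ā(τ)), and let χ : ℝ → ℝ be twice continuously differentiable. Define ψ(τ) = ā(τ)^{-1/4} · χ(ζ(τ)). Then for all τ ∈ J: −(ā(τ)/ℓ²) ψ''(τ) − (ā'(τ)/ℓ²) ψ'(τ) = −ā(τ)^{-1/4} · χ''(ζ(τ)) − (1/(16 ā(τ)))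 · (1 + 3 λ² ā(τ)²) · ψ(τ). -/
/-! With `w = ā^{-1/4}` one has `w' = -(1/4) w ā'/ā`, `ζ' = ℓ w²` and `w⁴ ā = 1`, so after the
chain and product rules the claim is an identity of rational functions in `w`, `ā`, `ā'`, `ā''`.
The exponent `-1/4` is exactly the one for which the `χ'(ζ)` terms of
`-(ā/ℓ²)ψ'' - (ā'/ℓ²)ψ'` cancel, leaving `-w χ''(ζ)` plus the potential
`(ā''/4 - ā'²/(16ā))/ℓ²` times `ψ`; the Friedmann equation and the equation of motion turn
that potential into `-(1 + 3λ²ā²)/(16ā)`. -/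

open Filter Topology

section
variable {𝕜 F : Type*} [NontriviallyNormedField 𝕜] [NormedAddCommGroup F] [NormedSpace 𝕜 F]
  {f : 𝕜 → F} {n : WithTop ℕ∞} {s : Set 𝕜} {x : 𝕜}

theorem ContDiffOn.hasDerivAt_of_isOpen (hf : ContDiffOn 𝕜 n f s) (hn : n ≠ 0) (hs : IsOpen s)
    (hx : x ∈ s) : HasDerivAt f (deriv f x) x :=
  ((hf.contDiffAt (hs.mem_nhds hx)).differentiableAt hn).hasDerivAt

theorem ContDiffOn.hasDerivAt_deriv_of_isOpen (hf : ContDiffOn 𝕜 n f s) (hn : 2 ≤ n)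
    (hs : IsOpen s) (hx : x ∈ s) : HasDerivAt (deriv f) (deriv (deriv f) x) x :=
  (hf.deriv_of_isOpen (m := 1) hs hn).hasDerivAt_of_isOpen one_ne_zero hs hx

end

theorem HasDerivAt.rpow_const_of_pos {f : ℝ → ℝ} {f' x p : ℝ} (hf : HasDerivAt f f' x)
    (hx : 0 < f x) : HasDerivAt (fun y => f y ^ p) (p * f x ^ p * f' / f x) x := by
  convert hf.rpow_const (p := p) (Or.inl hx.ne') using 1
  rw [Real.rpow_sub_one hx.ne']
  ring

theorem Real.one_div_sqrt_eq_rpow_neg_quarter_sq {x : ℝ} (hx : 0 ≤ x) :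
    1 / √x = (x ^ (-1/4 : ℝ)) ^ 2 := by
  rw [← Real.rpow_natCast, ← Real.rpow_mul hx, Real.sqrt_eq_rpow, one_div,
    ← Real.rpow_neg hx]
  norm_num

theorem Real.rpow_neg_quarter_pow_four_mul {x : ℝ} (hx : 0 < x) :
    (x ^ (-1/4 : ℝ)) ^ 4 * x = 1 := by
  rw [← Real.rpow_natCast, ← Real.rpow_mul hx.le]
  norm_num [Real.rpow_neg_one, inv_mul_cancel₀ hx.ne']

theorem liouville_normal_form {ℓ : ℝ} (hℓ : ℓ ≠ 0) {J : Set ℝ} (hJ : IsOpen J)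
    {a ζ χ : ℝ → ℝ} (ha : ∀ t ∈ J, 0 < a t) (ha₁ : ∀ t ∈ J, HasDerivAt a (deriv a t) t)
    (ha₂ : ∀ t ∈ J, HasDerivAt (deriv a) (deriv (deriv a) t) t)
    (hζ : ∀ t ∈ J, HasDerivAt ζ (ℓ / √(a t)) t) (hχ₁ : ∀ x, HasDerivAt χ (deriv χ x) x)
    (hχ₂ : ∀ x, HasDerivAt (deriv χ) (deriv (deriv χ) x) x) {ψ : ℝ → ℝ}
    (hψ : ψ = fun t => a t ^ (-1/4 : ℝ) * χ (ζ t)) {τ : ℝ} (hτ : τ ∈ J) :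
    -(a τ / ℓ ^ 2) * deriv (deriv ψ) τ - (deriv a τ / ℓ ^ 2) * deriv ψ τ
      = -(a τ ^ (-1/4 : ℝ)) * deriv (deriv χ) (ζ τ)
        + (deriv (deriv a) τ / 4 - deriv a τ ^ 2 / (16 * a τ)) / ℓ ^ 2 * ψ τ := by
  set w := fun t => a t ^ (-1/4 : ℝ) with hw_def
  have hw : ∀ t ∈ J, HasDerivAt w (-1/4 * w t * deriv a t / a t) t := fun t ht =>
    (ha₁ t ht).rpow_const_of_pos (ha t ht)
  have hζ' : ∀ t ∈ J, HasDerivAt ζ (ℓ * w t ^ 2) t := fun t ht => by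
    simpa [div_eq_mul_one_div ℓ, Real.one_div_sqrt_eq_rpow_neg_quarter_sq (ha t ht).le]
      using hζ t ht
  have hψ₁ : ∀ t ∈ J, HasDerivAt ψ
      (-1/4 * w t * deriv a t / a t * χ (ζ t) + ℓ * w t ^ 3 * deriv χ (ζ t)) t := fun t ht => by
    rw [hψ]
    exact ((hw t ht).mul ((hχ₁ (ζ t)).comp t (hζ' t ht))).congr_deriv
      (by simp only [Function.comp_apply]; ring)
  have hψ₂ := ((((hw τ hτ).const_mul (-1/4)).mul (ha₂ τ hτ)).div (ha₁ τ hτ) (ha τ hτ).ne' |>.mul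
      ((hχ₁ (ζ τ)).comp τ (hζ' τ hτ))).add
    ((((hw τ hτ).pow 3).const_mul ℓ).mul ((hχ₂ (ζ τ)).comp τ (hζ' τ hτ)))
  have hderivψ : deriv ψ =ᶠ[𝓝 τ] fun t =>
      -1/4 * w t * deriv a t / a t * χ (ζ t) + ℓ * w t ^ 3 * deriv χ (ζ t) :=
    eventuallyEq_of_mem (hJ.mem_nhds hτ) fun t ht => (hψ₁ t ht).deriv
  rw [hderivψ.deriv_eq.trans hψ₂.deriv, (hψ₁ τ hτ).deriv, hψ]
  have hwa := Real.rpow_neg_quarter_pow_four_mul (ha τ hτ)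
  have haτ := (ha τ hτ).ne'
  simp only [hw_def, Pi.mul_apply, Pi.div_apply, Pi.pow_apply, Function.comp_apply]
  generalize a τ ^ (-1/4 : ℝ) = u at hwa ⊢
  field_simp
  linear_combination (-256 * u * a τ * ℓ ^ 2 * deriv (deriv χ) (ζ τ)) * hwa

theorem instanton_potential {lam ℓ a a' a'' : ℝ} (hℓ : ℓ ≠ 0) (ha : a ≠ 0)
    (hfried : a' ^ 2 = ℓ ^ 2 * (1 - lam ^ 2 * a ^ 2)) (heom : a'' = -(lam ^ 2 * ℓ ^ 2) * a) :
    (a'' / 4 - a' ^ 2 / (16 * a)) / ℓ ^ 2 = -(1 / (16 * a)) * (1 + 3 * lam ^ 2 * a ^ 2) := by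
  rw [hfried, heom]
  field_simp
  ring

theorem canonical_form_of_fluctuation_operator_general
    (lam ℓ : ℝ) (hℓ : 0 < ℓ) (J : Set ℝ) (hJopen : IsOpen J)
    (abar : ℝ → ℝ) (habar : ContDiffOn ℝ 2 abar J)
    (hpos : ∀ τ ∈ J, 0 < abar τ)
    (hfried : ∀ τ ∈ J, (deriv abar τ) ^ 2 = ℓ ^ 2 * (1 - lam ^ 2 * (abar τ) ^ 2))
    (heom : ∀ τ ∈ J, deriv (deriv abar) τ = -(lam ^ 2 * ℓ ^ 2) * abar τ)
    (ζ : ℝ → ℝ) (hζ : ∀ τ ∈ J, HasDerivAt ζ (ℓ / Real.sqrt (abar τ)) τ)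
    (χ : ℝ → ℝ) (hχ : ContDiff ℝ 2 χ)
    (ψ : ℝ → ℝ) (hψ : ψ = fun τ => (abar τ) ^ (-1/4 : ℝ) * χ (ζ τ)) :
    ∀ τ ∈ J,
      -(abar τ / ℓ ^ 2) * deriv (deriv ψ) τ - (deriv abar τ / ℓ ^ 2) * deriv ψ τ
        = -((abar τ) ^ (-1/4 : ℝ)) * deriv (deriv χ) (ζ τ)
          - (1 / (16 * abar τ)) * (1 + 3 * lam ^ 2 * (abar τ) ^ 2) * ψ τ := by
  intro τ hτ
  have hχ' : ContDiffOn ℝ 2 χ Set.univ := hχ.contDiffOn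
  rw [liouville_normal_form hℓ.ne' hJopen hpos
    (fun t ht => habar.hasDerivAt_of_isOpen two_ne_zero hJopen ht)
    (fun t ht => habar.hasDerivAt_deriv_of_isOpen le_rfl hJopen ht) hζ
    (fun x => hχ'.hasDerivAt_of_isOpen two_ne_zero isOpen_univ trivial)
    (fun x => hχ'.hasDerivAt_deriv_of_isOpen le_rfl isOpen_univ trivial) hψ hτ,
    instanton_potential hℓ.ne' (hpos τ hτ).ne' (hfried τ hτ) (heom τ hτ)]
  ring

/-- Reduction of the fluctuation operator to canonical (Schrödinger) form: with
`ζ' = ℓ/√ā` and `ψ = ā^{-1/4} χ(ζ)`, one has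
`−(ā/ℓ²)ψ'' − (ā'/ℓ²)ψ' = −ā^{-1/4} χ''(ζ) − (1/(16ā))(1 + 3λ²ā²) ψ`
for any instanton `ā` solving the Friedmann equation. -/
theorem canonical_form_of_fluctuation_operator
    (lam ℓ : ℝ) (hℓ : 0 < ℓ) (J : Set ℝ) (hJopen : IsOpen J) (hJconn : J.OrdConnected)
    (abar : ℝ → ℝ) (habar : ContDiffOn ℝ 2 abar J)
    (hpos : ∀ τ ∈ J, 0 < abar τ)
    (hfried : ∀ τ ∈ J, (deriv abar τ) ^ 2 = ℓ ^ 2 * (1 - lam ^ 2 * (abar τ) ^ 2))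
    (heom : ∀ τ ∈ J, deriv (deriv abar) τ = -(lam ^ 2 * ℓ ^ 2) * abar τ)
    (ζ : ℝ → ℝ) (hζ : ∀ τ ∈ J, HasDerivAt ζ (ℓ / Real.sqrt (abar τ)) τ)
    (χ : ℝ → ℝ) (hχ : ContDiff ℝ 2 χ)
    (ψ : ℝ → ℝ) (hψ : ψ = fun τ => (abar τ) ^ (-1/4 : ℝ) * χ (ζ τ)) :
    ∀ τ ∈ J,
      -(abar τ / ℓ ^ 2) * deriv (deriv ψ) τ - (deriv abar τ / ℓ ^ 2) * deriv ψ τ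
        = -((abar τ) ^ (-1/4 : ℝ)) * deriv (deriv χ) (ζ τ)
          - (1 / (16 * abar τ)) * (1 + 3 * lam ^ 2 * (abar τ) ^ 2) * ψ τ :=
  canonical_form_of_fluctuation_operator_general lam ℓ hℓ J hJopen abar habar hpos hfried heom ζ hζ
    χ hχ ψ hψ
end

section
/- Let c > 0 and d ∈ ℝ, let ρ, μ : (0,∞) → ℝ be twice continuously differentiable with ρ > 0 and μ > 0, and let ω, V : (0,∞) → ℝ be continuous. For a twice continuously differentiable Ψ : (0,∞) → ℂ define (HΨ)(a) = (c/a) · [ Ψ''(a) + (ρ'(a)/ρ(a)) Ψ'(a) + ω(a) Ψ(a) ] − d · V(a) · Ψ(a). Suppose that for all twice continuously differentiable Ψ₁, Ψ₂ : (0,∞) → ℂ with compact support contained in (0,∞) one has ∫₀^∞ μ(a) · ( conj((HΨ₁)(a)) Ψ₂(a) − conj(Ψ₁(a)) (HΨ₂)(a) ) da = 0. Then there exists a constant κ > 0 such that μ(a) = κ · a · ρ(a) for all a > 0. -/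
open MeasureTheory

/-- The Wheeler–DeWitt Hamiltonian operator
`(HΨ)(a) = (c/a)[Ψ'' + (ρ'/ρ)Ψ' + ωΨ] − d V Ψ` of the minisuperspace model. -/
noncomputable def WDWHam (c d : ℝ) (ρ ω V : ℝ → ℝ) (Ψ : ℝ → ℂ) (a : ℝ) : ℂ :=
  (↑(c / a) : ℂ) * (deriv (deriv Ψ) a + (↑(deriv ρ a / ρ a) : ℂ) * deriv Ψ a
      + (↑(ω a) : ℂ) * Ψ a)
    - (↑(d * V a) : ℂ) * Ψ a

/-!
Test the symmetry on the real pair `Ψ₁ = φ`, `Ψ₂ = a φ`. The terms in `ω` and `V` cancel, and with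
`G = c μ / a` the symmetry condition becomes `∫ G ((φ²)' + (ρ'/ρ) φ²) = 0`; integrating by parts,
`∫ (G ρ'/ρ - G') φ² = 0` for every test function `φ`. Taking `φ` a bump where `G ρ'/ρ - G'` has a
sign shows `G' = G ρ'/ρ` on `(0, ∞)`, so `G / ρ` is constant, i.e. `μ = κ a ρ`.
-/

open Set Function Filter Topology ComplexConjugate

section CompactSupport

variable {α β : Type*} [TopologicalSpace α] [MulZeroClass β] [TopologicalSpace β] [ContinuousMul β]

theorem ContinuousOn.continuous_mul_of_tsupport_subset {U : Set α} (hU : IsOpen U) {f g : α → β}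
    (hf : ContinuousOn f U) (hg : Continuous g) (hgU : tsupport g ⊆ U) :
    Continuous fun x => f x * g x :=
  (hf.mul hg.continuousOn).continuous_of_tsupport_subset hU (tsupport_mul_subset_right.trans hgU)

end CompactSupport

theorem integral_mul_deriv_eq_neg_of_tsupport_subset {U : Set ℝ} (hU : IsOpen U) {G u : ℝ → ℝ}
    (hG : ContDiffOn ℝ 1 G U) (hu : ContDiff ℝ 1 u) (hu_cpt : HasCompactSupport u)
    (huU : tsupport u ⊆ U) :
    ∫ x, G x * deriv u x = -∫ x, deriv G x * u x := by
  have hu'U : tsupport (deriv u) ⊆ U := tsupport_deriv_subset.trans huU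
  have hG'U : ContinuousOn (deriv G) U := hG.continuousOn_deriv_of_isOpen hU le_rfl
  have hI₁ : Integrable fun x => G x * deriv u x :=
    (hG.continuousOn.continuous_mul_of_tsupport_subset hU (hu.continuous_deriv le_rfl)
      hu'U).integrable_of_hasCompactSupport hu_cpt.deriv.mul_left
  have hI₂ : Integrable fun x => deriv G x * u x :=
    (hG'U.continuous_mul_of_tsupport_subset hU hu.continuous huU).integrable_of_hasCompactSupport
      hu_cpt.mul_left
  have hI : Integrable fun x => G x * u x :=
    (hG.continuousOn.continuous_mul_of_tsupport_subset hU hu.continuous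
      huU).integrable_of_hasCompactSupport hu_cpt.mul_left
  have hderiv : ∀ x, HasDerivAt (fun y => G y * u y) (deriv G x * u x + G x * deriv u x) x := by
    intro x
    by_cases hx : x ∈ U
    · exact ((hG.differentiableOn one_ne_zero).differentiableAt (hU.mem_nhds hx)).hasDerivAt.mul
        (hu.differentiable one_ne_zero x).hasDerivAt
    · have hxu : x ∉ tsupport u := fun h => hx (huU h)
      have hzero : (fun y => G y * u y) =ᶠ[𝓝 x] fun _ => 0 := by
        filter_upwards [notMem_tsupport_iff_eventuallyEq.mp hxu] with y hy
        simp [hy]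
      rw [image_eq_zero_of_notMem_tsupport hxu,
        image_eq_zero_of_notMem_tsupport fun h => hxu (tsupport_deriv_subset h)]
      simpa using (hasDerivAt_const x (0 : ℝ)).congr_of_eventuallyEq hzero
  have hsum := integral_eq_zero_of_hasDerivAt_of_integrable hderiv (hI₂.add hI₁) hI
  rw [integral_add hI₂ hI₁] at hsum
  linarith

theorem nonpos_of_integral_mul_sq_nonpos {U : Set ℝ} (hU : IsOpen U) {E : ℝ → ℝ}
    (hE : ContinuousOn E U)
    (h : ∀ φ : ℝ → ℝ, ContDiff ℝ 2 φ → HasCompactSupport φ → tsupport φ ⊆ U →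
      ∫ x, E x * φ x ^ 2 ≤ 0)
    {x₀ : ℝ} (hx₀ : x₀ ∈ U) : E x₀ ≤ 0 := by
  by_contra! hpos
  obtain ⟨ε, hε, hball⟩ : ∃ ε > 0, ∀ x ∈ Metric.closedBall x₀ ε, x ∈ U ∧ 0 < E x :=
    Metric.nhds_basis_closedBall.eventually_iff.1 <| (hU.eventually_mem hx₀).and <|
      (hE.continuousAt (hU.mem_nhds hx₀)).eventually (lt_mem_nhds hpos)
  let φ : ContDiffBump x₀ := ⟨ε / 2, ε, half_pos hε, half_lt_self hε⟩
  have hφU : tsupport φ ⊆ U := by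
    rw [φ.tsupport_eq]
    exact fun x hx => (hball x hx).1
  have hφ2U : tsupport (fun x => φ x ^ 2) ⊆ U :=
    (tsupport_comp_subset (g := fun t : ℝ => t ^ 2) (by simp) φ).trans hφU
  refine (h φ φ.contDiff φ.hasCompactSupport hφU).not_gt ?_
  refine Continuous.integral_pos_of_hasCompactSupport_nonneg_nonzero (x := x₀)
    (hE.continuous_mul_of_tsupport_subset hU (φ.continuous.pow 2) hφ2U)
    (φ.hasCompactSupport.comp_left (g := fun t : ℝ => t ^ 2) (by simp)).mul_left
    (fun x => ?_) (mul_ne_zero hpos.ne' (by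
      simp [φ.one_of_mem_closedBall (Metric.mem_closedBall_self (half_pos hε).le)]))
  by_cases hx : x ∈ Metric.closedBall x₀ ε
  · exact mul_nonneg (hball x hx).2.le (sq_nonneg _)
  · have hφx : φ x = 0 := image_eq_zero_of_notMem_tsupport (by rwa [φ.tsupport_eq])
    simp [hφx]

theorem eqOn_zero_of_integral_mul_sq_eq_zero {U : Set ℝ} (hU : IsOpen U) {E : ℝ → ℝ}
    (hE : ContinuousOn E U)
    (h : ∀ φ : ℝ → ℝ, ContDiff ℝ 2 φ → HasCompactSupport φ → tsupport φ ⊆ U →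
      ∫ x, E x * φ x ^ 2 = 0) :
    EqOn E 0 U := fun _ hx =>
  le_antisymm (nonpos_of_integral_mul_sq_nonpos hU hE (fun φ h₁ h₂ h₃ => (h φ h₁ h₂ h₃).le) hx)
    (neg_nonpos.mp <| nonpos_of_integral_mul_sq_nonpos hU hE.neg
      (fun φ h₁ h₂ h₃ => by simp [neg_mul, integral_neg, h φ h₁ h₂ h₃]) hx)

theorem deriv_ofReal_comp (f : ℝ → ℝ) (x : ℝ) :
    deriv (fun y => (f y : ℂ)) x = deriv f x := by
  by_cases hf : DifferentiableAt ℝ f x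
  · exact hf.hasDerivAt.ofReal_comp.deriv
  · have hf' : ¬DifferentiableAt ℝ (fun y => (f y : ℂ)) x := fun h =>
      hf (by simpa [Function.comp_def] using (Complex.reCLM.differentiableAt.comp x h :))
    rw [deriv_zero_of_not_differentiableAt hf, deriv_zero_of_not_differentiableAt hf',
      Complex.ofReal_zero]

theorem WDWHam_ofReal (c d : ℝ) (ρ ω V f : ℝ → ℝ) (a : ℝ) :
    WDWHam c d ρ ω V (fun x => (f x : ℂ)) a =
      ↑(c / a * (deriv (deriv f) a + deriv ρ a / ρ a * deriv f a + ω a * f a) - d * V a * f a) := by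
  have hd : deriv (fun x => (f x : ℂ)) = fun x => ((deriv f x : ℝ) : ℂ) :=
    funext (deriv_ofReal_comp f ·)
  simp only [WDWHam, hd, deriv_ofReal_comp]
  push_cast
  ring

theorem conj_WDWHam_mul_sub_mul_WDWHam_ofReal (c d : ℝ) (ρ ω V f g : ℝ → ℝ) (a : ℝ) :
    conj (WDWHam c d ρ ω V (fun x => (f x : ℂ)) a) * g a
        - conj (f a : ℂ) * WDWHam c d ρ ω V (fun x => (g x : ℂ)) a =
      ↑(c / a * (deriv (deriv f) a * g a - f a * deriv (deriv g) a
        + deriv ρ a / ρ a * (deriv f a * g a - f a * deriv g a))) := by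
  simp only [WDWHam_ofReal, Complex.conj_ofReal]
  push_cast
  ring

def WDWHamIsSymmetric (c d : ℝ) (ρ μ ω V : ℝ → ℝ) : Prop :=
  ∀ Ψ₁ Ψ₂ : ℝ → ℂ, ContDiff ℝ 2 Ψ₁ → ContDiff ℝ 2 Ψ₂ →
    HasCompactSupport Ψ₁ → HasCompactSupport Ψ₂ →
    tsupport Ψ₁ ⊆ Ioi 0 → tsupport Ψ₂ ⊆ Ioi 0 →
    (∫ a in Ioi (0:ℝ), (↑(μ a) : ℂ) * (conj (WDWHam c d ρ ω V Ψ₁ a) * Ψ₂ a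
      - conj (Ψ₁ a) * WDWHam c d ρ ω V Ψ₂ a)) = 0

theorem deriv_id_mul {φ : ℝ → ℝ} (hφ : Differentiable ℝ φ) :
    deriv (fun x => x * φ x) = fun x => φ x + x * deriv φ x :=
  funext fun x => ((hasDerivAt_id' x).mul (hφ x).hasDerivAt).deriv.trans (by ring)

theorem deriv_deriv_id_mul {φ : ℝ → ℝ} (hφ : ContDiff ℝ 2 φ) :
    deriv (deriv fun x => x * φ x) = fun x => 2 * deriv φ x + x * deriv (deriv φ) x := by
  rw [deriv_id_mul (hφ.differentiable two_ne_zero)]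
  exact funext fun x => (((hφ.differentiable two_ne_zero x).hasDerivAt.add
    ((hasDerivAt_id' x).mul (hφ.differentiable_deriv_two x).hasDerivAt)).deriv).trans (by ring)

theorem integral_mul_deriv_sq_add_eq_zero_of_symmetric {c d : ℝ} {ρ μ ω V : ℝ → ℝ}
    (hsymm : WDWHamIsSymmetric c d ρ μ ω V) {φ : ℝ → ℝ} (hφ : ContDiff ℝ 2 φ)
    (hφ_cpt : HasCompactSupport φ) (hφU : tsupport φ ⊆ Ioi 0) :
    ∫ x, c * μ x / x * (deriv (fun y => φ y ^ 2) x + deriv ρ x / ρ x * φ x ^ 2) = 0 := by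
  have hψ : ContDiff ℝ 2 fun x => x * φ x := contDiff_id.mul hφ
  have hψU : tsupport (fun x => x * φ x) ⊆ Ioi 0 := tsupport_mul_subset_right.trans hφU
  have hsq : ∀ x, deriv (fun y => φ y ^ 2) x = 2 * φ x * deriv φ x := fun x =>
    ((hφ.differentiable two_ne_zero x).hasDerivAt.pow 2).deriv.trans (by ring)
  have hpoint : ∀ x, (μ x : ℂ) * (conj (WDWHam c d ρ ω V (fun y => (φ y : ℂ)) x) * (x * φ x : ℝ)
      - conj (φ x : ℂ) * WDWHam c d ρ ω V (fun y => ((y * φ y : ℝ) : ℂ)) x) =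
      -↑(c * μ x / x * (deriv (fun y => φ y ^ 2) x + deriv ρ x / ρ x * φ x ^ 2)) := fun x => by
    have h := conj_WDWHam_mul_sub_mul_WDWHam_ofReal c d ρ ω V φ (fun y => y * φ y) x
    beta_reduce at h
    rw [h, deriv_deriv_id_mul hφ, deriv_id_mul (hφ.differentiable two_ne_zero), hsq]
    push_cast
    ring
  have hzero := hsymm _ _ (Complex.ofRealCLM.contDiff.comp hφ) (Complex.ofRealCLM.contDiff.comp hψ)
    (hφ_cpt.comp_left Complex.ofReal_zero) (hφ_cpt.mul_left.comp_left Complex.ofReal_zero)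
    ((tsupport_comp_subset Complex.ofReal_zero φ).trans hφU)
    ((tsupport_comp_subset Complex.ofReal_zero _).trans hψU)
  simp only [Function.comp_def, Complex.ofRealCLM_apply, hpoint] at hzero
  rw [setIntegral_eq_integral_of_forall_compl_eq_zero fun x hx => ?_] at hzero
  · rwa [integral_neg, neg_eq_zero, integral_complex_ofReal, Complex.ofReal_eq_zero] at hzero
  · have hx' : x ∉ tsupport φ := fun h => hx (hφU h)
    simp [image_eq_zero_of_notMem_tsupport hx', hsq]

theorem integral_mul_deriv_add_eq {U : Set ℝ} (hU : IsOpen U) {G P u : ℝ → ℝ}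
    (hG : ContDiffOn ℝ 1 G U) (hP : ContinuousOn P U) (hu : ContDiff ℝ 1 u)
    (hu_cpt : HasCompactSupport u) (huU : tsupport u ⊆ U) :
    ∫ x, G x * (deriv u x + P x * u x) = ∫ x, (G x * P x - deriv G x) * u x := by
  have hI₁ : Integrable fun x => G x * deriv u x :=
    (hG.continuousOn.continuous_mul_of_tsupport_subset hU (hu.continuous_deriv le_rfl)
      (tsupport_deriv_subset.trans huU)).integrable_of_hasCompactSupport hu_cpt.deriv.mul_left
  have hI₂ : Integrable fun x => G x * P x * u x :=
    ((hG.continuousOn.mul hP).continuous_mul_of_tsupport_subset hU hu.continuous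
      huU).integrable_of_hasCompactSupport hu_cpt.mul_left
  have hI₃ : Integrable fun x => deriv G x * u x :=
    ((hG.continuousOn_deriv_of_isOpen hU le_rfl).continuous_mul_of_tsupport_subset hU
      hu.continuous huU).integrable_of_hasCompactSupport hu_cpt.mul_left
  calc ∫ x, G x * (deriv u x + P x * u x)
      = (∫ x, G x * deriv u x) + ∫ x, G x * P x * u x := by
        rw [← integral_add hI₁ hI₂]
        simp only [mul_add, mul_assoc]
    _ = ∫ x, (G x * P x - deriv G x) * u x := by
        rw [integral_mul_deriv_eq_neg_of_tsupport_subset hU hG hu hu_cpt huU, neg_add_eq_sub,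
          ← integral_sub hI₂ hI₃]
        simp only [sub_mul]

theorem IsOpen.exists_eqOn_const_mul_of_deriv_eq {U : Set ℝ} (hU : IsOpen U)
    (hU' : IsPreconnected U) {f g : ℝ → ℝ} (hf : DifferentiableOn ℝ f U)
    (hg : DifferentiableOn ℝ g U) (hg0 : ∀ x ∈ U, g x ≠ 0)
    (h : EqOn (deriv f) (fun x => f x * (deriv g x / g x)) U) :
    ∃ K, EqOn f (fun x => K * g x) U := by
  obtain ⟨K, hK⟩ := hU.exists_is_const_of_deriv_eq_zero hU' (hf.div hg hg0) fun x hx => by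
    have hfx := (hf.differentiableAt (hU.mem_nhds hx))
    have hgx := (hg.differentiableAt (hU.mem_nhds hx))
    rw [Pi.zero_apply, deriv_div hfx hgx (hg0 x hx), h hx]
    field_simp [hg0 x hx]
    ring
  exact ⟨K, fun x hx => (div_eq_iff (hg0 x hx)).mp (hK x hx)⟩

theorem wdw_hermiticity_fixes_measure_general
    (c d : ℝ) (hc : 0 < c) (ρ μ : ℝ → ℝ)
    (hρ : ContDiffOn ℝ 2 ρ (Set.Ioi 0)) (hμ : ContDiffOn ℝ 2 μ (Set.Ioi 0))
    (hρpos : ∀ a ∈ Set.Ioi (0:ℝ), 0 < ρ a)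
    (hμpos : ∀ a ∈ Set.Ioi (0:ℝ), 0 < μ a)
    (ω V : ℝ → ℝ)
    (hherm : ∀ Ψ₁ Ψ₂ : ℝ → ℂ,
      ContDiff ℝ 2 Ψ₁ → ContDiff ℝ 2 Ψ₂ →
      HasCompactSupport Ψ₁ → HasCompactSupport Ψ₂ →
      tsupport Ψ₁ ⊆ Set.Ioi 0 → tsupport Ψ₂ ⊆ Set.Ioi 0 →
      (∫ a in Set.Ioi (0:ℝ),
        (↑(μ a) : ℂ) * ((starRingEnd ℂ) (WDWHam c d ρ ω V Ψ₁ a) * Ψ₂ a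
          - (starRingEnd ℂ) (Ψ₁ a) * WDWHam c d ρ ω V Ψ₂ a)) = 0) :
    ∃ κ : ℝ, 0 < κ ∧ ∀ a ∈ Set.Ioi (0:ℝ), μ a = κ * (a * ρ a) := by
  set G : ℝ → ℝ := fun a => c * μ a / a
  have hG : ContDiffOn ℝ 1 G (Ioi 0) :=
    ((contDiffOn_const.mul hμ).div contDiffOn_id fun a ha => (mem_Ioi.mp ha).ne').of_le one_le_two
  have hP : ContinuousOn (fun a => deriv ρ a / ρ a) (Ioi 0) :=
    (hρ.continuousOn_deriv_of_isOpen isOpen_Ioi one_le_two).div hρ.continuousOn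
      fun a ha => (hρpos a ha).ne'
  have hE : EqOn (fun a => G a * (deriv ρ a / ρ a) - deriv G a) 0 (Ioi 0) :=
    eqOn_zero_of_integral_mul_sq_eq_zero isOpen_Ioi
      ((hG.continuousOn.mul hP).sub (hG.continuousOn_deriv_of_isOpen isOpen_Ioi le_rfl))
      fun φ hφ hφ_cpt hφU =>
        (integral_mul_deriv_add_eq isOpen_Ioi hG hP ((hφ.pow 2).of_le one_le_two)
          (hφ_cpt.comp_left (g := fun t : ℝ => t ^ 2) (by simp))
          ((tsupport_comp_subset (g := fun t : ℝ => t ^ 2) (by simp) φ).trans hφU)).symm.trans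
        (integral_mul_deriv_sq_add_eq_zero_of_symmetric hherm hφ hφ_cpt hφU)
  obtain ⟨K, hK⟩ := isOpen_Ioi.exists_eqOn_const_mul_of_deriv_eq isPreconnected_Ioi
    (hG.differentiableOn one_ne_zero) (hρ.differentiableOn two_ne_zero)
    (fun a ha => (hρpos a ha).ne') fun a ha => (sub_eq_zero.mp (hE ha)).symm
  have hμ_eq : ∀ a ∈ Ioi (0:ℝ), μ a = K / c * (a * ρ a) := fun a ha => by
    have hGa : c * μ a / a = K * ρ a := hK ha
    rw [div_eq_iff (mem_Ioi.mp ha).ne'] at hGa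
    field_simp
    linear_combination hGa
  refine ⟨K / c, ?_, hμ_eq⟩
  have h1 : (1 : ℝ) ∈ Ioi 0 := mem_Ioi.mpr one_pos
  have hκρ : 0 < K / c * (1 * ρ 1) := hμ_eq 1 h1 ▸ hμpos 1 h1
  exact (pos_iff_pos_of_mul_pos hκρ).mpr (by simpa using hρpos 1 h1)

/-- Hermiticity of the Wheeler–DeWitt Hamiltonian with respect to the inner product
`⟨Ψ₁, Ψ₂⟩ = ∫₀^∞ μ Ψ₁* Ψ₂ da` forces the measure to be `μ(a) = κ a ρ(a)`. -/
theorem wdw_hermiticity_fixes_measure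
    (c d : ℝ) (hc : 0 < c) (ρ μ : ℝ → ℝ)
    (hρ : ContDiffOn ℝ 2 ρ (Set.Ioi 0)) (hμ : ContDiffOn ℝ 2 μ (Set.Ioi 0))
    (hρpos : ∀ a ∈ Set.Ioi (0:ℝ), 0 < ρ a)
    (hμpos : ∀ a ∈ Set.Ioi (0:ℝ), 0 < μ a)
    (ω V : ℝ → ℝ)
    (hω : ContinuousOn ω (Set.Ioi 0)) (hV : ContinuousOn V (Set.Ioi 0))
    (hherm : ∀ Ψ₁ Ψ₂ : ℝ → ℂ,
      ContDiff ℝ 2 Ψ₁ → ContDiff ℝ 2 Ψ₂ →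
      HasCompactSupport Ψ₁ → HasCompactSupport Ψ₂ →
      tsupport Ψ₁ ⊆ Set.Ioi 0 → tsupport Ψ₂ ⊆ Set.Ioi 0 →
      (∫ a in Set.Ioi (0:ℝ),
        (↑(μ a) : ℂ) * ((starRingEnd ℂ) (WDWHam c d ρ ω V Ψ₁ a) * Ψ₂ a
          - (starRingEnd ℂ) (Ψ₁ a) * WDWHam c d ρ ω V Ψ₂ a)) = 0) :
    ∃ κ : ℝ, 0 < κ ∧ ∀ a ∈ Set.Ioi (0:ℝ), μ a = κ * (a * ρ a) :=
  wdw_hermiticity_fixes_measure_general c d hc ρ μ hρ hμ hρpos hμpos ω V hherm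
end
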